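/- arXiv:2508.10454 — 2 statements merged into one kernel-verified Lean document; each statement's English description precedes it below -/
import Mathlib

section
/- Let u : ℝ → ℝ be smooth with all even derivatives bounded on ℝ such that the series ∑_{k≥1} |u^{(2k)}(x)| s^{2k} / (2k)!! converges, and let g(y) = (1/(√(2π) s)) exp(-y²/(2s²)) for s > 0. Then for every x ∈ ℝ, |∫_ℝ u(y) g(x−y) dy − u(x)| ≤ ∑_{k=1}^∞ |u^{(2k)}(x)| s^{2k} / (2k)!!. -/
open MeasureTheory Real

lemma gammaNatAddHalf (k : ℕ) :
    Real.Gamma ((k : ℝ) + 1/2) = (Nat.factorial (2*k) : ℝ) / (4^k * Nat.factorial k) * Real.sqrt Real.pi := by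
  induction k with
  | zero => norm_num [Real.Gamma_one_half_eq]
  | succ k ih =>
    have h : ((k+1 : ℕ) : ℝ) + 1/2 = ((k : ℝ) + 1/2) + 1 := by push_cast; ring
    rw [h, Real.Gamma_add_one (by positivity), ih]
    have h2 : (2 * (k+1)) = (2*k+1) + 1 := by ring
    rw [h2, Nat.factorial_succ, Nat.factorial_succ, Nat.factorial_succ]
    have h4 : (Nat.factorial k : ℝ) ≠ 0 := Nat.cast_ne_zero.mpr (Nat.factorial_ne_zero k)
    have h5 : (4:ℝ)^k ≠ 0 := by positivity
    have h6 : (Nat.factorial (2*k) : ℝ) ≠ 0 := Nat.cast_ne_zero.mpr (Nat.factorial_ne_zero _)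
    field_simp
    push_cast
    ring

lemma integrable_pow_mul_gauss {b : ℝ} (hb : 0 < b) (n : ℕ) :
    Integrable (fun t : ℝ => t ^ n * Real.exp (-b * t^2)) := by
  exact (integrable_rpow_mul_exp_neg_mul_sq hb (lt_of_lt_of_le neg_one_lt_zero (Nat.cast_nonneg n))).congr
    (Filter.Eventually.of_forall (fun t => by simp [Real.rpow_natCast]))

lemma moment_gamma {b : ℝ} (hb : 0 < b) (k : ℕ) :
    ∫ t : ℝ, t ^ (2*k) * Real.exp (-b * t^2)
      = b ^ (-((k:ℝ) + 1/2)) * Real.Gamma ((k:ℝ) + 1/2) := by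
  have heven : ∀ t : ℝ, (-t) ^ (2*k) * Real.exp (-b * (-t)^2) = t ^ (2*k) * Real.exp (-b * t^2) := by
    intro t; rw [neg_sq]; congr 1; rw [pow_mul, pow_mul, neg_sq]
  have hsplit : ∫ t : ℝ, t ^ (2*k) * Real.exp (-b * t^2)
      = (∫ t in Set.Iic (0:ℝ), t ^ (2*k) * Real.exp (-b * t^2))
        + ∫ t in Set.Ioi (0:ℝ), t ^ (2*k) * Real.exp (-b * t^2) := by
    rw [← intervalIntegral.integral_Iic_add_Ioi (integrable_pow_mul_gauss hb (2*k)).integrableOn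
      (integrable_pow_mul_gauss hb (2*k)).integrableOn]
  have hneg : (∫ t in Set.Iic (0:ℝ), t ^ (2*k) * Real.exp (-b * t^2))
      = ∫ t in Set.Ioi (0:ℝ), t ^ (2*k) * Real.exp (-b * t^2) := by
    rw [show (Set.Ioi (0:ℝ)) = Set.Ioi (-(0:ℝ)) by norm_num,
      ← integral_comp_neg_Iic (0:ℝ) (fun t => t ^ (2*k) * Real.exp (-b * t^2))]
    exact setIntegral_congr_fun measurableSet_Iic (fun t _ => (heven t).symm)
  have hIoi : (∫ t in Set.Ioi (0:ℝ), t ^ (2*k) * Real.exp (-b * t^2))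
      = b ^ (-(((2*k:ℕ):ℝ) + 1) / 2) * (1/2) * Real.Gamma ((((2*k:ℕ):ℝ) + 1) / 2) := by
    rw [← integral_rpow_mul_exp_neg_mul_rpow (by norm_num : (0:ℝ) < 2)
      (lt_of_lt_of_le neg_one_lt_zero (Nat.cast_nonneg (2*k))) hb]
    refine setIntegral_congr_fun measurableSet_Ioi (fun t _ => ?_)
    rw [Real.rpow_natCast]
    norm_num
  rw [hsplit, hneg, hIoi]
  have h1 : (-(((2*k:ℕ):ℝ) + 1) / 2) = -((k:ℝ) + 1/2) := by push_cast; ring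
  have h2 : ((((2*k:ℕ):ℝ)) + 1) / 2 = (k:ℝ) + 1/2 := by push_cast; ring
  rw [h1, h2]; ring

lemma gauss_moment (s : ℝ) (hs : 0 < s) (k : ℕ) :
    ∫ t : ℝ, t ^ (2*k) * ((1 / (Real.sqrt (2 * Real.pi) * s)) * Real.exp (-t^2 / (2 * s^2)))
      = s ^ (2*k) * Nat.factorial (2*k) / (2^k * Nat.factorial k) := by
  have hss : (0:ℝ) < 2*s^2 := by positivity
  have hb : (0:ℝ) < (2*s^2)⁻¹ := by positivity
  have hrw : ∀ t : ℝ, Real.exp (-t^2 / (2*s^2)) = Real.exp (-(2*s^2)⁻¹ * t^2) := by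
    intro t; congr 1; field_simp
  simp_rw [hrw, mul_comm ((1 / (Real.sqrt (2 * Real.pi) * s))) _, ← mul_assoc]
  rw [integral_mul_const, moment_gamma hb, gammaNatAddHalf]
  have h1 : ((2*s^2)⁻¹ : ℝ) ^ (-((k:ℝ) + 1/2)) = (2*s^2) ^ ((k:ℝ) + 1/2) := by
    rw [Real.inv_rpow hss.le, Real.rpow_neg hss.le, inv_inv]
  rw [h1, Real.rpow_add hss, Real.rpow_natCast, ← Real.sqrt_eq_rpow]
  have h2 : Real.sqrt (2*s^2) = Real.sqrt 2 * s := by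
    rw [Real.sqrt_mul (by norm_num), Real.sqrt_sq hs.le]
  have h3 : Real.sqrt (2*Real.pi) = Real.sqrt 2 * Real.sqrt Real.pi := by
    rw [Real.sqrt_mul (by norm_num)]
  rw [h2, h3]
  have h4 : ((2:ℝ)*s^2)^k = 2^k * s^(2*k) := by rw [mul_pow, ← pow_mul]
  have h5 : (4:ℝ)^k = 2^k * 2^k := by rw [← mul_pow]; norm_num
  rw [h4, h5]
  have hs2 : (0:ℝ) < Real.sqrt 2 := by positivity
  have hsp : (0:ℝ) < Real.sqrt Real.pi := Real.sqrt_pos.mpr Real.pi_pos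
  have hfk : (Nat.factorial k : ℝ) ≠ 0 := Nat.cast_ne_zero.mpr (Nat.factorial_ne_zero k)
  field_simp
open MeasureTheory Real


/-- Lemma 1 (asymptotic error of Gaussian smoothing): if `u` is smooth, real-analytic
(its Taylor series converges to it everywhere), with all even derivatives bounded, and the
majorant series `∑_{k≥1} |u^{(2k)}(x)| s^{2k}/(2k)!!` converges (with `(2k)!! = 2^k k!`),
then the convolution with the centered Gaussian of std `s` deviates from `u(x)` by at most
that series. -/
theorem gaussian_smoothing_asymptotic_error
    (u : ℝ → ℝ) (s : ℝ) (hs : 0 < s)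
    (hu : ContDiff ℝ (⊤ : ℕ∞) u)
    (hanalytic : ∀ x y : ℝ,
      HasSum (fun n : ℕ => iteratedDeriv n u x * (y - x) ^ n / (Nat.factorial n)) (u y))
    (hbdd : ∀ k : ℕ, ∃ C : ℝ, ∀ x : ℝ, |iteratedDeriv (2 * k) u x| ≤ C)
    (x : ℝ)
    (hsum : Summable (fun k : ℕ =>
      |iteratedDeriv (2 * (k + 1)) u x| * s ^ (2 * (k + 1)) /
        (2 ^ (k + 1) * Nat.factorial (k + 1)))) :
    |(∫ y : ℝ, u y * ((1 / (Real.sqrt (2 * Real.pi) * s)) *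
        Real.exp (-(x - y) ^ 2 / (2 * s ^ 2)))) - u x| ≤
      ∑' k : ℕ, |iteratedDeriv (2 * (k + 1)) u x| * s ^ (2 * (k + 1)) /
        (2 ^ (k + 1) * Nat.factorial (k + 1)) := by
  have hπ : (0:ℝ) < Real.sqrt (2*Real.pi) := Real.sqrt_pos.mpr (by positivity)
  set g : ℝ → ℝ := fun t => (1 / (Real.sqrt (2 * Real.pi) * s)) * Real.exp (-t ^ 2 / (2 * s ^ 2))
    with hgdef
  set a : ℕ → ℝ := fun n => iteratedDeriv n u x with hadef
  set c : ℕ → ℝ := fun k => a (2*k) * s^(2*k) / (2^k * (Nat.factorial k : ℝ)) with hcdef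
  have hb : (0:ℝ) < (2*s^2)⁻¹ := by positivity
  have hexp : ∀ t : ℝ, Real.exp (-t^2/(2*s^2)) = Real.exp (-(2*s^2)⁻¹*t^2) := by
    intro t; congr 1; field_simp
  have hint : ∀ n : ℕ, Integrable (fun t : ℝ => t ^ n * g t) := by
    intro n
    have h : (fun t : ℝ => t ^ n * g t)
        = fun t => (1 / (Real.sqrt (2 * Real.pi) * s)) * (t^n * Real.exp (-(2*s^2)⁻¹*t^2)) := by
      funext t; rw [hgdef]; simp only; rw [hexp t]; ring
    rw [h]
    exact (integrable_pow_mul_gauss hb n).const_mul _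
  have hgpos : ∀ t, 0 < g t := fun t =>
    mul_pos (one_div_pos.mpr (mul_pos hπ hs)) (Real.exp_pos _)
  have hgeven : ∀ t : ℝ, g (-t) = g t := by intro t; simp only [hgdef, neg_sq]
  have hmoment : ∀ k : ℕ, (∫ t : ℝ, t ^ (2*k) * g t)
      = s ^ (2*k) * Nat.factorial (2*k) / (2^k * Nat.factorial k) := by
    intro k; rw [hgdef]; exact gauss_moment s hs k
  -- Step 1: change of variables
  have step1 : (∫ y : ℝ, u y * ((1 / (Real.sqrt (2 * Real.pi) * s)) *
        Real.exp (-(x - y) ^ 2 / (2 * s ^ 2)))) = ∫ t : ℝ, u (x + t) * g t := by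
    rw [← integral_add_left_eq_self x (f := fun y : ℝ => u y * ((1 / (Real.sqrt (2 * Real.pi) * s)) *
        Real.exp (-(x - y) ^ 2 / (2 * s ^ 2))))]
    apply integral_congr_ae
    filter_upwards with t
    rw [hgdef]
    simp only
    rw [show (x - (x + t))^2 = t^2 by ring]
  -- boundedness of u
  obtain ⟨C, hC⟩ := hbdd 0
  have hCu : ∀ y : ℝ, |u y| ≤ C := by
    intro y; have := hC y; rwa [mul_zero, iteratedDeriv_zero] at this
  have hgint : Integrable g := by
    have := hint 0
    simpa using this
  have hAint : Integrable (fun t : ℝ => u (x + t) * g t) := by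
    apply hgint.bdd_mul (c := C)
    · exact ((hu.continuous.comp (continuous_const.add continuous_id)).aestronglyMeasurable)
    · exact Filter.Eventually.of_forall (fun t => by rw [Real.norm_eq_abs]; exact hCu (x + t))
  have hBint : Integrable (fun t : ℝ => u (x - t) * g t) := by
    apply hgint.bdd_mul (c := C)
    · exact ((hu.continuous.comp (continuous_const.sub continuous_id)).aestronglyMeasurable)
    · exact Filter.Eventually.of_forall (fun t => by rw [Real.norm_eq_abs]; exact hCu (x - t))
  have hswap : (∫ t : ℝ, u (x - t) * g t) = ∫ t : ℝ, u (x + t) * g t := by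
    calc (∫ t : ℝ, u (x - t) * g t) = ∫ t : ℝ, u (x + -t) * g (-t) := by
          apply integral_congr_ae; filter_upwards with t
          rw [hgeven, sub_eq_add_neg]
      _ = ∫ t : ℝ, u (x + t) * g t := integral_neg_eq_self (fun t => u (x + t) * g t) volume
  -- Step 2: symmetrization
  have step2 : (∫ t : ℝ, u (x + t) * g t) = ∫ t : ℝ, ((u (x + t) + u (x - t))/2) * g t := by
    have h : ∀ t : ℝ, ((u (x + t) + u (x - t))/2) * g t
        = (u (x + t) * g t)/2 + (u (x - t) * g t)/2 := fun t => by ring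
    simp_rw [h]
    rw [integral_add (hAint.div_const 2) (hBint.div_const 2), integral_div, integral_div, hswap]
    ring
  -- Step 3: pointwise expansion
  have key : ∀ t : ℝ, HasSum (fun k : ℕ => a (2*k) * t^(2*k) / (Nat.factorial (2*k)) * g t)
      (((u (x + t) + u (x - t))/2) * g t) := by
    intro t
    have h1 : HasSum (fun n : ℕ => a n * t^n / (Nat.factorial n)) (u (x + t)) := by
      simpa using hanalytic x (x + t)
    have h2 : HasSum (fun n : ℕ => a n * (-t)^n / (Nat.factorial n)) (u (x - t)) := by
      have := hanalytic x (x - t)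
      simpa [show x - t - x = -t by ring] using this
    have h3 := (h1.add h2).div_const 2
    have hinj : Function.Injective (fun k : ℕ => 2*k) := fun p q h => by
      have h' : 2*p = 2*q := h
      omega
    have h0 : ∀ n ∉ Set.range (fun k : ℕ => 2*k),
        (fun n : ℕ => (a n * t^n / (Nat.factorial n) + a n * (-t)^n / (Nat.factorial n))/2) n = 0 := by
      intro n hn
      simp only [Set.mem_range] at hn
      have hodd : Odd n := by
        refine Nat.not_even_iff_odd.mp (fun he => ?_)
        obtain ⟨m, hm⟩ := he
        exact hn ⟨m, by omega⟩
      show (a n * t^n / (Nat.factorial n) + a n * (-t)^n / (Nat.factorial n))/2 = 0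
      rw [hodd.neg_pow]
      ring
    have h4 : HasSum ((fun n : ℕ => (a n * t^n / (Nat.factorial n)
          + a n * (-t)^n / (Nat.factorial n))/2) ∘ (fun k : ℕ => 2*k))
        ((u (x + t) + u (x - t))/2) :=
      (Function.Injective.hasSum_iff hinj h0).mpr h3
    have h5 : ((fun n : ℕ => (a n * t^n / (Nat.factorial n)
          + a n * (-t)^n / (Nat.factorial n))/2) ∘ (fun k : ℕ => 2*k))
        = fun k : ℕ => a (2*k) * t^(2*k) / (Nat.factorial (2*k)) := by
      funext k
      have : Even (2*k) := ⟨k, by ring⟩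
      simp only [Function.comp_apply, this.neg_pow]
      ring
    rw [h5] at h4
    exact h4.mul_right (g t)
  -- Step 4: integrability and norms of the terms
  have hfint : ∀ k : ℕ, Integrable (fun t : ℝ => a (2*k) * t^(2*k) / (Nat.factorial (2*k)) * g t) := by
    intro k
    have h : (fun t : ℝ => a (2*k) * t^(2*k) / (Nat.factorial (2*k)) * g t)
        = fun t => (a (2*k) / (Nat.factorial (2*k))) * (t^(2*k) * g t) := by funext t; ring
    rw [h]; exact (hint (2*k)).const_mul _
  have hfct : (Nat.factorial 0 : ℝ) ≠ 0 := by norm_num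
  have hnorm : ∀ k : ℕ, (∫ t : ℝ, ‖a (2*k) * t^(2*k) / (Nat.factorial (2*k)) * g t‖)
      = |a (2*k)| * s^(2*k) / (2^k * (Nat.factorial k : ℝ)) := by
    intro k
    have h1 : ∀ t : ℝ, ‖a (2*k) * t^(2*k) / (Nat.factorial (2*k)) * g t‖
        = (|a (2*k)| / (Nat.factorial (2*k))) * (t^(2*k) * g t) := by
      intro t
      have ht : (0:ℝ) ≤ t^(2*k) := by rw [pow_mul]; positivity
      rw [Real.norm_eq_abs, abs_mul, abs_div, abs_mul, abs_of_nonneg ht,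
        abs_of_pos (hgpos t), Nat.abs_cast]
      ring
    simp_rw [h1]
    rw [integral_const_mul, hmoment k]
    have h2 : (Nat.factorial (2*k) : ℝ) ≠ 0 := Nat.cast_ne_zero.mpr (Nat.factorial_ne_zero _)
    field_simp
  have hsum' : Summable (fun k : ℕ => |a (2*k)| * s^(2*k) / (2^k * (Nat.factorial k : ℝ))) := by
    rw [← summable_nat_add_iff 1]
    exact hsum
  have hsum2 : Summable (fun k : ℕ =>
      ∫ t : ℝ, ‖a (2*k) * t^(2*k) / (Nat.factorial (2*k)) * g t‖) := by
    rw [funext hnorm]; exact hsum'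
  -- Step 5: interchange sum and integral
  have hHS := hasSum_integral_of_summable_integral_norm (μ := volume) hfint hsum2
  have hIked : ∀ k : ℕ, (∫ t : ℝ, a (2*k) * t^(2*k) / (Nat.factorial (2*k)) * g t) = c k := by
    intro k
    have h : (fun t : ℝ => a (2*k) * t^(2*k) / (Nat.factorial (2*k)) * g t)
        = fun t => (a (2*k) / (Nat.factorial (2*k))) * (t^(2*k) * g t) := by funext t; ring
    rw [h, integral_const_mul, hmoment k, hcdef]
    have h2 : (Nat.factorial (2*k) : ℝ) ≠ 0 := Nat.cast_ne_zero.mpr (Nat.factorial_ne_zero _)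
    simp only
    field_simp
  have htsum_eq : (∫ t : ℝ, ∑' k : ℕ, a (2*k) * t^(2*k) / (Nat.factorial (2*k)) * g t)
      = ∫ t : ℝ, ((u (x + t) + u (x - t))/2) * g t := by
    apply integral_congr_ae; filter_upwards with t
    exact (key t).tsum_eq
  have hc : HasSum c (∫ y : ℝ, u y * ((1 / (Real.sqrt (2 * Real.pi) * s)) *
      Real.exp (-(x - y) ^ 2 / (2 * s ^ 2)))) := by
    have h := hHS
    rw [show (fun k : ℕ => ∫ t : ℝ, a (2*k) * t^(2*k) / (Nat.factorial (2*k)) * g t) = c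
      from funext hIked] at h
    rwa [htsum_eq, ← step2, ← step1] at h
  -- Step 6: peel off the k = 0 term and bound
  have hc0 : c 0 = u x := by
    simp [hcdef, hadef, iteratedDeriv_zero]
  have hcs : Summable c := hc.summable
  have hcs1 : Summable (fun k : ℕ => c (k + 1)) := (summable_nat_add_iff 1).mpr hcs
  have hI : (∫ y : ℝ, u y * ((1 / (Real.sqrt (2 * Real.pi) * s)) *
      Real.exp (-(x - y) ^ 2 / (2 * s ^ 2)))) = c 0 + ∑' k : ℕ, c (k + 1) := by
    rw [← hc.tsum_eq]
    exact hcs.tsum_eq_zero_add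
  rw [hI, hc0, add_sub_cancel_left]
  have habs : ∀ k : ℕ, ‖c (k + 1)‖ = |iteratedDeriv (2 * (k + 1)) u x| * s ^ (2 * (k + 1)) /
      (2 ^ (k + 1) * Nat.factorial (k + 1)) := by
    intro k
    rw [hcdef, Real.norm_eq_abs]
    simp only
    rw [abs_div, abs_mul, abs_of_nonneg (by positivity : (0:ℝ) ≤ s ^ (2*(k+1))),
      abs_of_pos (by positivity : (0:ℝ) < (2:ℝ)^(k+1) * (Nat.factorial (k+1) : ℝ))]
  calc |∑' k : ℕ, c (k + 1)| ≤ ∑' k : ℕ, ‖c (k + 1)‖ := by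
        rw [← Real.norm_eq_abs]
        apply norm_tsum_le_tsum_norm
        simp_rw [habs]
        exact hsum
    _ = ∑' k : ℕ, |iteratedDeriv (2 * (k + 1)) u x| * s ^ (2 * (k + 1)) /
        (2 ^ (k + 1) * Nat.factorial (k + 1)) := tsum_congr habs
end

section
/- Let u : ℝ → ℝ be a polynomial of degree at most 2m, let s > 0, and let g(y) = (1/(√(2π)s)) exp(-y²/(2s²)). Then ∫_ℝ u(y) g(x−y) dy = ∑_{k=0}^{m} u^{(2k)}(x) s^{2k} / (2^k k!) for every x ∈ ℝ. -/
/-!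
Substituting `y = x + z` and expanding `u` in its finite Taylor series at `x` turns the integral
into a combination of the Gaussian moments `Mₙ = ∫ zⁿ e^{-b z²}`, `b = 1 / (2 s²)`. Odd moments
vanish by symmetry, and integrating the derivative of `z^{n+1} e^{-b z²}` over `ℝ` gives
`M_{n+2} = (n + 1) / (2b) · Mₙ`, hence `M_{2k} = √(π / b) (2k)! / (k! (4b)^k)`. The factor
`√(π / b) = √(2π) s` cancels the normalisation of the Gaussian.
-/

open MeasureTheory Real Polynomial

theorem Finset.sum_range_two_mul {M : Type*} [AddCommMonoid M] (f : ℕ → M) (n : ℕ) :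
    ∑ i ∈ Finset.range (2 * n), f i = ∑ k ∈ Finset.range n, (f (2 * k) + f (2 * k + 1)) := by
  induction n with
  | zero => simp
  | succ n ih => rw [Nat.mul_succ, Finset.sum_range_succ, Finset.sum_range_succ, ih,
      Finset.sum_range_succ, add_assoc]

theorem Polynomial.eval_add_eq_sum_range_iterate_derivative {K : Type*} [Field K] [CharZero K]
    {u : K[X]} {N : ℕ} (hN : u.natDegree < N) (x h : K) :
    u.eval (x + h) = ∑ n ∈ Finset.range N, (derivative^[n] u).eval x / n.factorial * h ^ n := by
  rw [add_comm, ← taylor_eval, eval_eq_sum_range' (by rwa [natDegree_taylor])]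
  refine Finset.sum_congr rfl fun n _ => ?_
  rw [taylor_coeff, ← factorial_smul_hasseDeriv, LinearMap.smul_apply, eval_smul, nsmul_eq_mul,
    mul_div_cancel_left₀ _ (Nat.cast_ne_zero.2 n.factorial_ne_zero)]

section GaussianMoments

variable {b : ℝ}

theorem integrable_pow_mul_exp_neg_mul_sq (hb : 0 < b) (n : ℕ) :
    Integrable fun z : ℝ => z ^ n * exp (-b * z ^ 2) := by
  simpa [rpow_natCast] using
    integrable_rpow_mul_exp_neg_mul_sq hb (s := n) (neg_one_lt_zero.trans_le n.cast_nonneg)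

theorem integral_pow_odd_mul_exp_neg_mul_sq (b : ℝ) (n : ℕ) :
    ∫ z : ℝ, z ^ (2 * n + 1) * exp (-b * z ^ 2) = 0 := by
  have hodd : ∫ z : ℝ, (-z) ^ (2 * n + 1) * exp (-b * (-z) ^ 2)
      = -∫ z : ℝ, z ^ (2 * n + 1) * exp (-b * z ^ 2) := by
    rw [← integral_neg]
    simp only [Odd.neg_pow ⟨n, rfl⟩, neg_sq, neg_mul]
  linarith [hodd.symm.trans
    (integral_neg_eq_self (fun z => z ^ (2 * n + 1) * exp (-b * z ^ 2)) volume)]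

theorem integral_pow_add_two_mul_exp_neg_mul_sq (hb : 0 < b) (n : ℕ) :
    ∫ z : ℝ, z ^ (n + 2) * exp (-b * z ^ 2)
      = (n + 1) / (2 * b) * ∫ z : ℝ, z ^ n * exp (-b * z ^ 2) := by
  have hderiv : ∀ z : ℝ, HasDerivAt (fun z => z ^ (n + 1) * exp (-b * z ^ 2))
      ((n + 1) * (z ^ n * exp (-b * z ^ 2)) - 2 * b * (z ^ (n + 2) * exp (-b * z ^ 2))) z :=
    fun z => ((hasDerivAt_pow (n + 1) z).mul
      (((hasDerivAt_pow 2 z).const_mul (-b)).exp)).congr_deriv (by push_cast; ring)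
  have hibp := integral_eq_zero_of_hasDerivAt_of_integrable hderiv
    (((integrable_pow_mul_exp_neg_mul_sq hb n).const_mul _).sub
      ((integrable_pow_mul_exp_neg_mul_sq hb (n + 2)).const_mul _))
    (integrable_pow_mul_exp_neg_mul_sq hb (n + 1))
  rw [integral_sub ((integrable_pow_mul_exp_neg_mul_sq hb n).const_mul _)
      ((integrable_pow_mul_exp_neg_mul_sq hb (n + 2)).const_mul _),
    integral_const_mul, integral_const_mul, sub_eq_zero] at hibp
  rw [div_mul_eq_mul_div, eq_div_iff (by positivity)]
  linarith

theorem integral_pow_even_mul_exp_neg_mul_sq (hb : 0 < b) (k : ℕ) :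
    ∫ z : ℝ, z ^ (2 * k) * exp (-b * z ^ 2)
      = √(π / b) * (2 * k).factorial / (k.factorial * (4 * b) ^ k) := by
  induction k with
  | zero => simpa using integral_gaussian b
  | succ k ih =>
    rw [Nat.mul_succ, integral_pow_add_two_mul_exp_neg_mul_sq hb, ih, Nat.factorial_succ,
      Nat.factorial_succ, Nat.factorial_succ]
    push_cast
    field_simp
    ring

end GaussianMoments

theorem Polynomial.integral_eval_add_mul_exp_neg_mul_sq {b : ℝ} (hb : 0 < b) {u : ℝ[X]} {m : ℕ}
    (hu : u.natDegree ≤ 2 * m) (x : ℝ) :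
    ∫ z : ℝ, u.eval (x + z) * exp (-b * z ^ 2)
      = √(π / b) * ∑ k ∈ Finset.range (m + 1),
          (derivative^[2 * k] u).eval x / (k.factorial * (4 * b) ^ k) := by
  have hN : u.natDegree < 2 * (m + 1) := by omega
  calc ∫ z : ℝ, u.eval (x + z) * exp (-b * z ^ 2)
      = ∫ z : ℝ, ∑ n ∈ Finset.range (2 * (m + 1)),
          (derivative^[n] u).eval x / n.factorial * (z ^ n * exp (-b * z ^ 2)) := by
        simp only [eval_add_eq_sum_range_iterate_derivative hN, Finset.sum_mul, mul_assoc]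
    _ = ∑ n ∈ Finset.range (2 * (m + 1)),
          (derivative^[n] u).eval x / n.factorial * ∫ z : ℝ, z ^ n * exp (-b * z ^ 2) := by
        rw [integral_finsetSum _ fun n _ => (integrable_pow_mul_exp_neg_mul_sq hb n).const_mul _]
        simp only [integral_const_mul]
    _ = ∑ k ∈ Finset.range (m + 1), (derivative^[2 * k] u).eval x / (2 * k).factorial *
          ∫ z : ℝ, z ^ (2 * k) * exp (-b * z ^ 2) := by
        simp only [Finset.sum_range_two_mul, integral_pow_odd_mul_exp_neg_mul_sq, mul_zero,
          add_zero]
    _ = _ := by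
        rw [Finset.mul_sum]
        refine Finset.sum_congr rfl fun k _ => ?_
        rw [integral_pow_even_mul_exp_neg_mul_sq hb]
        have := (Nat.cast_ne_zero (R := ℝ)).2 (2 * k).factorial_ne_zero
        field_simp

/-- Exact moment expansion of the convolution of a polynomial of degree at most `2m`
with a centered Gaussian of standard deviation `s`. -/
theorem polynomial_gaussian_convolution (u : Polynomial ℝ) (m : ℕ)
    (hdeg : u.natDegree ≤ 2 * m) (s : ℝ) (hs : 0 < s) (x : ℝ) :
    (∫ y : ℝ, u.eval y * ((1 / (Real.sqrt (2 * Real.pi) * s)) *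
        Real.exp (-(x - y) ^ 2 / (2 * s ^ 2)))) =
      ∑ k ∈ Finset.range (m + 1),
        ((Polynomial.derivative^[2 * k] u).eval x) * s ^ (2 * k) /
          (2 ^ k * Nat.factorial k) := by
  have hb : 0 < (2 * s ^ 2)⁻¹ := by positivity
  have hnorm : √(π / (2 * s ^ 2)⁻¹) = √(2 * π) * s := by
    rw [div_inv_eq_mul, show π * (2 * s ^ 2) = 2 * π * s ^ 2 by ring, sqrt_mul (by positivity),
      sqrt_sq hs.le]
  have hvar : 4 * (2 * s ^ 2)⁻¹ = 2 / s ^ 2 := by field_simp; ring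
  calc (∫ y : ℝ, u.eval y * ((1 / (√(2 * π) * s)) * exp (-(x - y) ^ 2 / (2 * s ^ 2))))
      = 1 / (√(2 * π) * s) * ∫ z : ℝ, u.eval (x + z) * exp (-(2 * s ^ 2)⁻¹ * z ^ 2) := by
        rw [← integral_add_left_eq_self _ x, ← integral_const_mul]
        congr 1 with z
        rw [show -(x - (x + z)) ^ 2 / (2 * s ^ 2) = -(2 * s ^ 2)⁻¹ * z ^ 2 by ring]
        ring
    _ = _ := by
        rw [integral_eval_add_mul_exp_neg_mul_sq hb hdeg, hnorm, ← mul_assoc,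
          one_div_mul_cancel (by positivity), one_mul]
        refine Finset.sum_congr rfl fun k _ => ?_
        rw [hvar, div_pow, ← pow_mul]
        field_simp
end
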